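/- Let Γ be a maximal SKHM-consistent set of L_Khm formulas and M^c_Γ its canonical model. Given an action a = ⟨ψ',⊥,φ'⟩ ∈ Σ_Γ, if a is executable (has at least one a-successor) at every ψ-state w ∈ S^c, then U(ψ → ψ') ∈ Γ. -/

import Mathlib

/-!
Suppose `U(ψ → ψ') ∉ Γ`. Then `{θ | Uθ ∈ Γ} ∪ {¬(ψ → ψ')}` is consistent (U is a normal
modality), so it extends to an MCS `Δ`; by 4KhmU and 5KhmU, `Δ` has exactly the `Khm`-formulas
of `Γ`, i.e. `Δ ∈ Φ_Γ`. Since `Khm(⊤,⊥,⊤) ∈ Γ` by EMPKhm, `(Δ, ⊤^⊤)` is a canonical state, and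
it is a `ψ`-state. Executing `⟨ψ',⊥,φ'⟩` there requires `ψ' ∈ Δ`, contradicting `¬ψ' ∈ Δ`.
-/

/-- Formulas of the language L_Khm over a countable set of proposition
letters (represented by `ℕ`): `φ ::= p | ¬φ | (φ∧φ) | Khm(φ,φ,φ)`. -/
inductive Formula : Type
  | atom : ℕ → Formula
  | neg : Formula → Formula
  | and : Formula → Formula → Formula
  | khm : Formula → Formula → Formula → Formula
deriving DecidableEq

namespace Formula

/-- The falsum `⊥`, as a standard abbreviation. -/
def falsum : Formula := and (atom 0) (neg (atom 0))

/-- The verum `⊤`. -/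
def top : Formula := neg falsum

/-- Material implication, as a standard abbreviation. -/
def imp (φ ψ : Formula) : Formula := neg (and φ (neg ψ))

/-- Biimplication. -/
def biimp (φ ψ : Formula) : Formula := and (imp φ ψ) (imp ψ φ)

/-- The universal modality `Uφ := Khm(¬φ, ⊤, ⊥)`. -/
def U (φ : Formula) : Formula := khm (neg φ) top falsum

/-- Uniform substitution of formulas for proposition letters. -/
def subst (f : ℕ → Formula) : Formula → Formula
  | atom n => f n
  | neg φ => neg (subst f φ)
  | and φ ψ => and (subst f φ) (subst f ψ)
  | khm φ χ ψ => khm (subst f φ) (subst f χ) (subst f ψ)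

end Formula

/-- A model (ability map): a labelled transition system over action symbols `Act`,
with a set of states `S`, transitions `R`, and valuation `V`. -/
structure Model (Act : Type) where
  S : Type
  R : Act → S → S → Prop
  V : S → Set ℕ

namespace Model

variable {Act : Type} (M : Model Act)

/-- `M.bigStep σ s t` : `s →σ t`, i.e. `t` is reachable from `s` by executing the
sequence of actions `σ`. -/
def bigStep : List Act → M.S → M.S → Prop
  | [], s, t => s = t
  | a :: σ, s, t => ∃ u, M.R a s u ∧ bigStep σ u t

/-- `σ = a₁⋯aₙ` is strongly executable at `s` if for each `0 ≤ k < n`,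
`s →σ_k t` implies `t` has at least one `a_{k+1}`-successor. -/
def stronglyExec (σ : List Act) (s : M.S) : Prop :=
  ∀ k (h : k < σ.length) (t : M.S),
    M.bigStep (σ.take k) s t → ∃ u, M.R (σ.get ⟨k, h⟩) t u

/-- Satisfaction. `M.sat (Formula.khm ψ χ φ) s` holds iff there is `σ ∈ Act*`
such that for every `s'` with `M, s' ⊨ ψ`: `σ` is strongly `χ`-executable at `s'`
(strongly executable, and all strictly intermediate states satisfy `χ`) and
`M, t ⊨ φ` for all `t` with `s' →σ t`. -/
def sat : Formula → M.S → Prop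
  | .atom n, s => n ∈ M.V s
  | .neg φ, s => ¬ sat φ s
  | .and φ ψ, s => sat φ s ∧ sat ψ s
  | .khm ψ χ φ, s => ∃ σ : List Act, ∀ s', sat ψ s' →
      (M.stronglyExec σ s' ∧
        ∀ k, 0 < k → k < σ.length → ∀ t, M.bigStep (σ.take k) s' t → sat χ t) ∧
      (∀ t, M.bigStep σ s' t → sat φ t)

end Model

/-- A formula is valid (w.r.t. the class of all models over action symbols `Act`)
if it is satisfied at every state of every model. -/
def Valid (Act : Type) (φ : Formula) : Prop :=
  ∀ M : Model Act, Nonempty M.S → ∀ s : M.S, M.sat φ s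

/-- Boolean evaluation treating proposition letters and `Khm`-formulas as atoms. -/
def evalB (v : Formula → Bool) : Formula → Bool
  | .atom n => v (.atom n)
  | .neg φ => ! evalB v φ
  | .and φ ψ => evalB v φ && evalB v ψ
  | .khm ψ χ φ => v (.khm ψ χ φ)

/-- Propositional tautologies. -/
def Tautology (φ : Formula) : Prop := ∀ v, evalB v φ = true

open Formula in
/-- Derivability in the proof system SKHM. -/
inductive Deriv : Formula → Prop
  | taut {φ} : Tautology φ → Deriv φ
  | distU (p q) : Deriv (((U p).and (U (p.imp q))).imp (U q))
  | tU (p) : Deriv ((U p).imp p)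
  | fourKhmU (p o q) : Deriv ((khm p o q).imp (U (khm p o q)))
  | fiveKhmU (p o q) : Deriv ((neg (khm p o q)).imp (U (neg (khm p o q))))
  | empKhm (p q) : Deriv ((U (p.imp q)).imp (khm p falsum q))
  | compKhm (p o r q) :
      Deriv ((((khm p o r).and (khm r o q)).and (U (r.imp o))).imp (khm p o q))
  | oneKhm (p o q) :
      Deriv (((khm p o q).and (neg (khm p falsum q))).imp (khm p falsum o))
  | uKhm (p' p o o' q q') :
      Deriv (((((U (p'.imp p)).and (U (o.imp o'))).and (U (q.imp q'))).and
        (khm p o q)).imp (khm p' o' q'))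
  | mp {φ ψ} : Deriv (φ.imp ψ) → Deriv φ → Deriv ψ
  | necU {φ} : Deriv φ → Deriv (U φ)
  | sub {φ} (f : ℕ → Formula) : Deriv φ → Deriv (φ.subst f)

/-- Conjunction of a finite list of formulas. -/
def conjList : List Formula → Formula
  | [] => Formula.top
  | φ :: L => φ.and (conjList L)

/-- A set of formulas is SKHM-consistent if no finite conjunction of its
members has its negation derivable in SKHM. -/
def ConsistentSet (Γ : Set Formula) : Prop :=
  ∀ L : List Formula, (∀ φ ∈ L, φ ∈ Γ) → ¬ Deriv (Formula.neg (conjList L))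

/-- Maximal SKHM-consistent set. -/
def MCS (Γ : Set Formula) : Prop :=
  ConsistentSet Γ ∧ ∀ Δ, ConsistentSet Δ → Γ ⊆ Δ → Δ = Γ

/-- `Δ|Khm`: the positive `Khm`-formulas of `Δ`. -/
def khmPart (Δ : Set Formula) : Set Formula :=
  {θ ∈ Δ | ∃ ψ χ φ, θ = Formula.khm ψ χ φ}

/-- `Φ_Γ`: the set of all MCSs `Δ` with `Δ|Khm = Γ|Khm`. -/
def PhiGamma (Γ : Set Formula) : Set (Set Formula) :=
  {Δ | MCS Δ ∧ khmPart Δ = khmPart Γ}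

/-- Canonical action symbols: `⟨ψ,⊥,φ⟩` (`one ψ φ`) and `⟨χ^ψ,φ⟩` (`two χ ψ φ`). -/
inductive CanAct : Type
  | one : Formula → Formula → CanAct
  | two : Formula → Formula → Formula → CanAct
deriving DecidableEq

/-- The formula in the last component of a canonical action. -/
def CanAct.post : CanAct → Formula
  | .one _ φ => φ
  | .two _ _ φ => φ

/-- The canonical action set
`Σ_Γ = {⟨ψ,⊥,φ⟩ : Khm(ψ,⊥,φ) ∈ Γ} ∪ {⟨χ^ψ,φ⟩ : Khm(ψ,χ,φ) ∈ Γ, ¬Khm(ψ,⊥,φ) ∈ Γ}`. -/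
def SigmaGamma (Γ : Set Formula) : Set CanAct :=
  {a | (∃ ψ φ, a = CanAct.one ψ φ ∧ Formula.khm ψ Formula.falsum φ ∈ Γ) ∨
       (∃ χ ψ φ, a = CanAct.two χ ψ φ ∧ Formula.khm ψ χ φ ∈ Γ ∧
          Formula.neg (Formula.khm ψ Formula.falsum φ) ∈ Γ)}

/-- Canonical states: pairs `(Δ, χ^ψ)` (the marker `χ^ψ` is the pair `(χ, ψ)`)
with `χ ∈ Δ ∈ Φ_Γ`, and either `⟨χ^ψ,φ⟩ ∈ Σ_Γ` for some `φ`, or `⟨ψ,⊥,χ⟩ ∈ Σ_Γ`. -/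
def CanStates (Γ : Set Formula) : Set (Set Formula × Formula × Formula) :=
  {w | w.1 ∈ PhiGamma Γ ∧ w.2.1 ∈ w.1 ∧
       ((∃ φ, CanAct.two w.2.1 w.2.2 φ ∈ SigmaGamma Γ) ∨
        CanAct.one w.2.2 w.2.1 ∈ SigmaGamma Γ)}

/-- The canonical model `M^c_Γ` over the action set `Σ_Γ`. For a canonical state
`w`, `L(w) = w.1.1` and `R(w) = w.1.2`. -/
def canonicalModel (Γ : Set Formula) : Model {a : CanAct // a ∈ SigmaGamma Γ} where
  S := {w : Set Formula × Formula × Formula // w ∈ CanStates Γ}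
  R a w w' :=
    match a.1 with
    | CanAct.one ψ φ => ψ ∈ w.1.1 ∧ w'.1.2 = (φ, ψ)
    | CanAct.two χ ψ φ => w.1.2 = (χ, ψ) ∧ φ ∈ w'.1.1
  V w := {n | Formula.atom n ∈ w.1.1}

open Formula

@[simp, grind =] lemma evalB_neg (v : Formula → Bool) (φ : Formula) :
    evalB v φ.neg = !evalB v φ := rfl

@[simp, grind =] lemma evalB_and (v : Formula → Bool) (φ ψ : Formula) :
    evalB v (φ.and ψ) = (evalB v φ && evalB v ψ) := rfl

@[simp, grind =] lemma evalB_falsum (v : Formula → Bool) : evalB v falsum = false := by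
  simp [falsum, evalB]

@[simp, grind =] lemma evalB_top (v : Formula → Bool) : evalB v top = true := by
  simp [top]

@[simp, grind =] lemma evalB_imp (v : Formula → Bool) (φ ψ : Formula) :
    evalB v (φ.imp ψ) = (!evalB v φ || evalB v ψ) := by
  simp [imp, evalB]

@[simp, grind =] lemma evalB_conjList_nil (v : Formula → Bool) : evalB v (conjList []) = true := by
  simp [conjList]

@[simp, grind =] lemma evalB_conjList_cons (v : Formula → Bool) (φ : Formula) (L : List Formula) :
    evalB v (conjList (φ :: L)) = (evalB v φ && evalB v (conjList L)) := by
  simp [conjList]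

namespace Deriv

variable {a b c : Formula}

lemma imp_trans (hab : Deriv (a.imp b)) (hbc : Deriv (b.imp c)) : Deriv (a.imp c) :=
  mp (mp (taut fun _ => by grind) hab) hbc

lemma imp_and (hab : Deriv (a.imp b)) (hac : Deriv (a.imp c)) : Deriv (a.imp (b.and c)) :=
  mp (mp (taut fun _ => by grind) hab) hac

lemma neg_of_imp_of_imp_neg (hab : Deriv (a.imp b)) (hab' : Deriv (a.imp b.neg)) :
    Deriv a.neg :=
  mp (mp (taut fun _ => by grind) hab) hab'

lemma conjList_imp_of_mem {L : List Formula} (h : a ∈ L) : Deriv ((conjList L).imp a) := by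
  induction L with
  | nil => cases h
  | cons b L ih =>
    rcases List.mem_cons.mp h with rfl | h
    · exact taut fun _ => by grind
    · exact imp_trans (taut fun _ => by grind) (ih h)

lemma conjList_imp_conjList {L M : List Formula} (h : L ⊆ M) :
    Deriv ((conjList M).imp (conjList L)) := by
  induction L with
  | nil => exact taut fun _ => by grind
  | cons a L ih =>
    exact imp_and (conjList_imp_of_mem (h List.mem_cons_self))
      (ih (List.subset_of_cons_subset h))

end Deriv

theorem consistentSet_insert_of_not_deriv {Γ₀ : Set Formula} {χ : Formula}
    (h : ∀ L : List Formula, (∀ φ ∈ L, φ ∈ Γ₀) → ¬ Deriv ((conjList L).imp χ.neg)) :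
    ConsistentSet (insert χ Γ₀) := by
  intro M hM hM_incons
  refine h (M.filter (· ≠ χ)) (fun φ hφ => ?_) ?_
  · obtain ⟨hφM, hφχ⟩ := List.mem_filter.mp hφ
    exact (hM φ hφM).resolve_left (by simpa using hφχ)
  · have hsub : M ⊆ χ :: M.filter (· ≠ χ) := fun φ hφ => by
      by_cases hφχ : φ = χ
      · exact hφχ ▸ List.mem_cons_self
      · exact List.mem_cons_of_mem _ (List.mem_filter.mpr ⟨hφ, by simpa using hφχ⟩)
    have hχ_incons : Deriv (conjList (χ :: M.filter (· ≠ χ))).neg :=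
      Deriv.mp (Deriv.mp (Deriv.taut fun _ => by grind)
        (Deriv.conjList_imp_conjList hsub)) hM_incons
    exact Deriv.mp (Deriv.taut fun _ => by grind) hχ_incons

theorem ConsistentSet.exists_mcs_superset {Γ₀ : Set Formula} (h : ConsistentSet Γ₀) :
    ∃ Δ, MCS Δ ∧ Γ₀ ⊆ Δ := by
  have hub : ∀ c ⊆ {Δ | ConsistentSet Δ}, IsChain (· ⊆ ·) c → c.Nonempty →
      ∃ ub ∈ {Δ | ConsistentSet Δ}, ∀ s ∈ c, s ⊆ ub := by
    refine fun c hc hchain hne => ⟨⋃₀ c, fun L hL => ?_, fun s hs => Set.subset_sUnion_of_mem hs⟩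
    obtain ⟨t, htc, hLt⟩ := hchain.directedOn.exists_mem_subset_of_finite_of_subset_sUnion hne
      L.finite_toSet hL
    exact hc htc L hLt
  obtain ⟨Δ, hsub, hmax⟩ := zorn_subset_nonempty _ hub Γ₀ h
  exact ⟨Δ, ⟨hmax.prop, fun _ hΔ' hsub' => hmax.eq_of_superset hΔ' hsub'⟩, hsub⟩

def uPart (Γ : Set Formula) : Set Formula := {θ | U θ ∈ Γ}

namespace MCS

variable {Γ : Set Formula} (hΓ : MCS Γ)
include hΓ

theorem mem_of_consistentSet_insert {φ : Formula} (h : ConsistentSet (insert φ Γ)) : φ ∈ Γ :=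
  hΓ.2 _ h (Set.subset_insert _ _) ▸ Set.mem_insert _ _

theorem mem_of_deriv_conjList_imp {φ : Formula} (L : List Formula) (hL : ∀ x ∈ L, x ∈ Γ)
    (hd : Deriv ((conjList L).imp φ)) : φ ∈ Γ := by
  by_contra hφ
  obtain ⟨L', hL', hd'⟩ : ∃ L', (∀ x ∈ L', x ∈ Γ) ∧ Deriv ((conjList L').imp φ.neg) := by
    by_contra! hcons
    exact hφ (hΓ.mem_of_consistentSet_insert (consistentSet_insert_of_not_deriv hcons))
  refine hΓ.1 (L ++ L') (fun x hx => (List.mem_append.mp hx).elim (hL x) (hL' x)) ?_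
  exact Deriv.neg_of_imp_of_imp_neg
    (Deriv.imp_trans (Deriv.conjList_imp_conjList (List.subset_append_left L L')) hd)
    (Deriv.imp_trans (Deriv.conjList_imp_conjList (List.subset_append_right L L')) hd')

theorem mem_of_deriv {φ : Formula} (h : Deriv φ) : φ ∈ Γ :=
  hΓ.mem_of_deriv_conjList_imp [] (by simp) (Deriv.mp (Deriv.taut fun _ => by grind) h)

theorem mem_of_deriv_imp {φ ψ : Formula} (h : Deriv (φ.imp ψ)) (hφ : φ ∈ Γ) : ψ ∈ Γ :=
  hΓ.mem_of_deriv_conjList_imp [φ] (by simp [hφ])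
    (Deriv.imp_trans (Deriv.taut fun _ => by grind) h)

theorem mem_of_deriv_and_imp {φ ψ χ : Formula} (h : Deriv ((φ.and ψ).imp χ)) (hφ : φ ∈ Γ)
    (hψ : ψ ∈ Γ) : χ ∈ Γ :=
  hΓ.mem_of_deriv_conjList_imp [φ, ψ] (by simp [hφ, hψ])
    (Deriv.imp_trans (Deriv.taut fun _ => by grind) h)

theorem neg_notMem {φ : Formula} (hφ : φ ∈ Γ) : φ.neg ∉ Γ := fun hnφ =>
  hΓ.1 [φ, φ.neg] (by simp [hφ, hnφ]) (Deriv.taut fun _ => by grind)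

theorem neg_mem_of_notMem {φ : Formula} (hφ : φ ∉ Γ) : φ.neg ∈ Γ := by
  by_contra hnφ
  refine hnφ (hΓ.mem_of_consistentSet_insert
    (consistentSet_insert_of_not_deriv fun L hL hd => hφ ?_))
  exact hΓ.mem_of_deriv_conjList_imp L hL (Deriv.imp_trans hd (Deriv.taut fun _ => by grind))

theorem U_mem_of_deriv_conjList_imp {φ : Formula} (L : List Formula)
    (hL : ∀ x ∈ L, U x ∈ Γ) (hd : Deriv ((conjList L).imp φ)) : U φ ∈ Γ := by
  induction L generalizing φ with
  | nil => exact hΓ.mem_of_deriv (Deriv.necU (Deriv.mp hd (Deriv.taut fun _ => by grind)))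
  | cons x L ih =>
    have hxφ : U (x.imp φ) ∈ Γ := ih (fun y hy => hL y (List.mem_cons_of_mem _ hy))
      (Deriv.mp (Deriv.taut fun _ => by grind) hd)
    exact hΓ.mem_of_deriv_and_imp (Deriv.distU x φ) (hL x List.mem_cons_self) hxφ

theorem exists_uPart_subset_neg_mem {φ : Formula} (h : U φ ∉ Γ) :
    ∃ Δ, MCS Δ ∧ uPart Γ ⊆ Δ ∧ φ.neg ∈ Δ := by
  have hcons : ConsistentSet (insert φ.neg (uPart Γ)) :=
    consistentSet_insert_of_not_deriv fun L hL hd => h <|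
      hΓ.U_mem_of_deriv_conjList_imp L hL (Deriv.imp_trans hd (Deriv.taut fun _ => by grind))
  obtain ⟨Δ, hΔ, hsub⟩ := hcons.exists_mcs_superset
  exact ⟨Δ, hΔ, (Set.subset_insert _ _).trans hsub, hsub (Set.mem_insert _ _)⟩

theorem khmPart_eq_of_uPart_subset {Δ : Set Formula} (hΔ : MCS Δ) (h : uPart Γ ⊆ Δ) :
    khmPart Δ = khmPart Γ := by
  ext θ
  constructor
  · rintro ⟨hθ, p, o, q, rfl⟩
    refine ⟨?_, p, o, q, rfl⟩
    by_contra hθΓ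
    exact hΔ.neg_notMem hθ
      (h (hΓ.mem_of_deriv_imp (Deriv.fiveKhmU p o q) (hΓ.neg_mem_of_notMem hθΓ)))
  · rintro ⟨hθ, p, o, q, rfl⟩
    exact ⟨h (hΓ.mem_of_deriv_imp (Deriv.fourKhmU p o q) hθ), p, o, q, rfl⟩

theorem khm_top_falsum_top_mem : khm top falsum top ∈ Γ :=
  hΓ.mem_of_deriv_imp (Deriv.empKhm top top)
    (hΓ.mem_of_deriv (Deriv.necU (Deriv.taut fun _ => by grind)))

end MCS

theorem mk_top_top_mem_canStates {Γ Δ : Set Formula} (hΓ : MCS Γ) (hΔ : Δ ∈ PhiGamma Γ) :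
    (Δ, top, top) ∈ CanStates Γ :=
  ⟨hΔ, hΔ.1.mem_of_deriv (Deriv.taut fun _ => by grind),
    Or.inr (Or.inl ⟨top, top, rfl, hΓ.khm_top_falsum_top_mem⟩)⟩

theorem mem_of_canonicalModel_R_one {Γ : Set Formula} {a : {a : CanAct // a ∈ SigmaGamma Γ}}
    {ψ φ : Formula} (ha : a.1 = CanAct.one ψ φ) {w w' : (canonicalModel Γ).S}
    (h : (canonicalModel Γ).R a w w') : ψ ∈ w.1.1 := by
  simp only [canonicalModel, ha] at h
  exact h.1

/-- if `a = ⟨ψ',⊥,φ'⟩ ∈ Σ_Γ` is executable at every `ψ`-state of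
the canonical model, then `U(ψ → ψ') ∈ Γ`. -/
theorem IMPinHead (Γ : Set Formula) (hΓ : MCS Γ)
    (a : {a : CanAct // a ∈ SigmaGamma Γ}) (ψ' φ' : Formula)
    (ha : a.1 = CanAct.one ψ' φ') (ψ : Formula)
    (hexec : ∀ w : (canonicalModel Γ).S, ψ ∈ w.1.1 →
      ∃ w', (canonicalModel Γ).R a w w') :
    Formula.U (ψ.imp ψ') ∈ Γ := by
  by_contra hU
  obtain ⟨Δ, hΔ, hUΔ, hnimp⟩ := hΓ.exists_uPart_subset_neg_mem hU
  have hψ : ψ ∈ Δ := hΔ.mem_of_deriv_imp (Deriv.taut fun _ => by grind) hnimp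
  have hnψ' : ψ'.neg ∈ Δ := hΔ.mem_of_deriv_imp (Deriv.taut fun _ => by grind) hnimp
  have hw := mk_top_top_mem_canStates hΓ ⟨hΔ, hΓ.khmPart_eq_of_uPart_subset hΔ hUΔ⟩
  obtain ⟨w', hw'⟩ := hexec ⟨_, hw⟩ hψ
  exact hΔ.neg_notMem (mem_of_canonicalModel_R_one ha hw') hnψ'
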